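/- Let H be a graph with dom(H) ≥ u, let c be a u-clique of a graph G consisting of vertices that are common neighbors of each other, and let N(c) be the set of common neighbors of the vertices of c. Then the number of subgraphs J of G isomorphic to H with c contained in the set of dominating vertices of J equals N(H^{↓u}, G[N(c)]), the number of subgraphs of the induced subgraph G[N(c)] isomorphic to H with u dominating vertices removed. -/

import Mathlib

/-!
Deleting the vertices of `c` is a bijection from the copies `J` of `H` in which every vertex of
`c` is dominating onto the copies of `H^{↓u}` in `G[N(c)]`: the other vertices of `J` are adjacent
to all of `c`, and the inverse adds back the clique `c` joined to every vertex. The isomorphism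
types match because dominating vertices are twins: a bijection between two equally large sets of
dominating vertices of `H` extends to an automorphism of `H` (permute the dominating vertices, fix
the others), so `J - c ≅ H - D` whichever dominating vertices of `H` correspond to `c`.
-/

open SimpleGraph Finset Filter Topology

/-- `F` is contained in `G` as a subgraph: there is an injective graph homomorphism. -/
def Graph.Contains {β α : Type*} (F : SimpleGraph β) (G : SimpleGraph α) : Prop :=
  ∃ f : F →g G, Function.Injective f

/-- The number of subgraphs of `G` isomorphic to `H`. -/
noncomputable def copyCount {β α : Type*} (H : SimpleGraph β) (G : SimpleGraph α) : ℕ :=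
  {J : G.Subgraph | Nonempty (J.coe ≃g H)}.ncard

/-- The number of `u`-cliques of `G`. -/
noncomputable def kclique {α : Type*} (u : ℕ) (G : SimpleGraph α) : ℕ :=
  {s : Finset α | G.IsNClique u s}.ncard

/-- The set of dominating vertices of a graph. -/
def domSet {α : Type*} (H : SimpleGraph α) : Set α := {v | ∀ w, w ≠ v → H.Adj v w}

/-- The number of dominating vertices of a graph. -/
noncomputable def domCount {α : Type*} (H : SimpleGraph α) : ℕ := (domSet H).ncard

/-- The set of dominating vertices of a subgraph `J`: vertices of `J` adjacent in `J`
to all other vertices of `J`. -/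
def subDomSet {α : Type*} {G : SimpleGraph α} (J : G.Subgraph) : Set α :=
  {v ∈ J.verts | ∀ w ∈ J.verts, w ≠ v → J.Adj v w}

/-- The common neighborhood of a finite vertex set `c` in `G`. -/
def commonNbhd {α : Type*} (G : SimpleGraph α) (c : Finset α) : Set α :=
  {v | ∀ x ∈ c, G.Adj x v}

/-- `ω(c)`: the size of a largest clique of `G` containing `c`. -/
noncomputable def omegaC {α : Type*} (G : SimpleGraph α) (c : Finset α) : ℕ :=
  sSup {m | ∃ s : Finset α, c ⊆ s ∧ G.IsNClique m s}

/-- `Δ(c)`: the number of common neighbors of `c` in `G`. -/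
noncomputable def deltaC {α : Type*} (G : SimpleGraph α) (c : Finset α) : ℕ :=
  (commonNbhd G c).ncard

/-- `ω(J)`: the max of `ω(c)` over `u`-sets `c` of dominating vertices of the subgraph `J`. -/
noncomputable def omegaJ {α : Type*} (G : SimpleGraph α) (u : ℕ) (J : G.Subgraph) : ℕ :=
  sSup {m | ∃ c : Finset α, ↑c ⊆ subDomSet J ∧ c.card = u ∧ m = omegaC G c}

/-- `Δ(J)`: the max of `Δ(c)` over `u`-sets `c` of dominating vertices of the subgraph `J`. -/
noncomputable def deltaJ {α : Type*} (G : SimpleGraph α) (u : ℕ) (J : G.Subgraph) : ℕ :=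
  sSup {m | ∃ c : Finset α, ↑c ⊆ subDomSet J ∧ c.card = u ∧ m = deltaC G c}

/-- The complete split graph `K_u ∨ I_d`. -/
def completeSplitGraph (u d : ℕ) : SimpleGraph (Fin u ⊕ Fin d) where
  Adj x y := x ≠ y ∧ (x.isLeft ∨ y.isLeft)
  symm := by constructor; rintro x y ⟨h1, h2⟩; exact ⟨h1.symm, h2.symm⟩
  loopless := by constructor; rintro x ⟨h, -⟩; exact h rfl

/-- Disjoint union of a family of graphs. -/
def sigmaGraph {ι : Type*} {β : ι → Type*} (G : ∀ i, SimpleGraph (β i)) :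
    SimpleGraph (Σ i, β i) where
  Adj x y := ∃ (i : ι) (a b : β i), x = ⟨i, a⟩ ∧ y = ⟨i, b⟩ ∧ (G i).Adj a b
  symm := by constructor; rintro x y ⟨i, a, b, rfl, rfl, hab⟩; exact ⟨i, b, a, rfl, rfl, hab.symm⟩
  loopless := by
    constructor
    rintro x ⟨i, a, b, rfl, h2, hab⟩
    injection h2 with h1 h2'
    exact hab.ne h2'

/-- `ex_u(p, H, F)`: maximum number of copies of `H` in an `F`-free graph with exactly
`p` `u`-cliques (graphs taken on `Fin n` for some `n`). -/
noncomputable def exu {ι : Type*} {β : ι → Type*} (u p : ℕ) {h : ℕ} (H : SimpleGraph (Fin h))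
    (F : ∀ i, SimpleGraph (β i)) : ℕ :=
  sSup {N | ∃ (n : ℕ) (G : SimpleGraph (Fin n)),
    (∀ i, ¬ Graph.Contains (F i) G) ∧ kclique u G = p ∧ _root_.copyCount H G = N}

namespace SimpleGraph

variable {α β : Type*} {H : SimpleGraph α} {K : SimpleGraph β}

lemma adj_iff_ne_of_mem_domSet {v : α} (hv : v ∈ domSet H) (w : α) : H.Adj v w ↔ v ≠ w :=
  ⟨Adj.ne, fun h => hv w h.symm⟩

lemma Iso.apply_mem_domSet (e : K ≃g H) {v : β} (hv : v ∈ domSet K) : e v ∈ domSet H := by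
  intro w hw
  rw [← e.apply_symm_apply w, e.map_adj_iff]
  exact hv _ fun h => hw (by rw [← h, e.apply_symm_apply])

lemma map_adj_iff_of_mapsTo_domSet (φ : β ≃ α) {C : Set β} (hC : C ⊆ domSet K)
    (hφC : Set.MapsTo φ C (domSet H))
    (hφ : ∀ a b, a ∉ C → b ∉ C → (H.Adj (φ a) (φ b) ↔ K.Adj a b)) (a b : β) :
    H.Adj (φ a) (φ b) ↔ K.Adj a b := by
  by_cases ha : a ∈ C
  · rw [adj_iff_ne_of_mem_domSet (hφC ha), adj_iff_ne_of_mem_domSet (hC ha), φ.injective.ne_iff]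
  by_cases hb : b ∈ C
  · rw [H.adj_comm, K.adj_comm, adj_iff_ne_of_mem_domSet (hφC hb),
      adj_iff_ne_of_mem_domSet (hC hb), φ.injective.ne_iff]
  exact hφ a b ha hb

def autOfPermDomSet [DecidablePred (· ∈ domSet H)] (σ : Equiv.Perm (domSet H)) : H ≃g H where
  toEquiv := Equiv.Perm.ofSubtype σ
  map_rel_iff' {a b} := by
    refine map_adj_iff_of_mapsTo_domSet _ subset_rfl (fun x hx => ?_) (fun a b ha hb => ?_) a b
    · exact (Equiv.Perm.ofSubtype_apply_mem_iff_mem σ x).2 hx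
    · simp [Equiv.Perm.ofSubtype_apply_of_not_mem σ ha,
        Equiv.Perm.ofSubtype_apply_of_not_mem σ hb]

lemma Iso.exists_iso_extending (e : K ≃g H) {C : Set β} [Finite C] (hC : C ⊆ domSet K)
    {D : Set α} (hD : D ⊆ domSet H) (f : C ≃ D) :
    ∃ φ : K ≃g H, ∀ x : C, φ x = f x := by
  classical
  obtain ⟨σ, hσ⟩ := Equiv.Perm.exists_extending_pair
    (fun x : C => (⟨e x, e.apply_mem_domSet (hC x.2)⟩ : domSet H))
    (fun x : C => (⟨f x, hD (f x).2⟩ : domSet H))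
    (fun x y hxy => Subtype.ext (e.injective (congrArg Subtype.val hxy)))
    (fun x y hxy => f.injective (Subtype.ext (Subtype.mk.inj hxy)))
  refine ⟨e.trans (autOfPermDomSet σ), fun x => ?_⟩
  simp [autOfPermDomSet, Equiv.Perm.ofSubtype_apply_of_mem σ (e.apply_mem_domSet (hC x.2)), hσ]

lemma Iso.nonempty_induce_compl_iso (e : K ≃g H) {C : Set β} [Finite C] (hC : C ⊆ domSet K)
    {D : Set α} (hD : D ⊆ domSet H) (f : C ≃ D) :
    Nonempty (K.induce Cᶜ ≃g H.induce Dᶜ) := by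
  obtain ⟨φ, hφ⟩ := e.exists_iso_extending hC hD f
  have himage : φ '' C = D := by
    ext y
    refine ⟨?_, fun hy => ⟨f.symm ⟨y, hy⟩, (f.symm ⟨y, hy⟩).2, by simp [hφ]⟩⟩
    rintro ⟨x, hx, rfl⟩
    exact hφ ⟨x, hx⟩ ▸ (f ⟨x, hx⟩).2
  have hbij : Set.BijOn φ Cᶜ Dᶜ := by
    rw [← himage, ← Set.image_compl_eq φ.bijective]
    exact φ.injective.injOn.bijOn_image
  exact ⟨φ.induce hbij⟩

lemma nonempty_iso_of_induce_compl_iso {C : Set β} (hC : C ⊆ domSet K) {D : Set α}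
    (hD : D ⊆ domSet H) (f : C ≃ D) (g : K.induce Cᶜ ≃g H.induce Dᶜ) :
    Nonempty (K ≃g H) := by
  classical
  let φ : β ≃ α := (Equiv.Set.sumCompl C).symm.trans
    ((f.sumCongr g.toEquiv).trans (Equiv.Set.sumCompl D))
  have hφC : ∀ x (hx : x ∈ C), φ x = f ⟨x, hx⟩ := fun x hx => by
    simp [φ, Equiv.Set.sumCompl_symm_apply_of_mem hx]
  have hφCc : ∀ x (hx : x ∉ C), φ x = g ⟨x, hx⟩ := fun x hx => by
    simp [φ, Equiv.Set.sumCompl_symm_apply_of_notMem hx]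
  refine ⟨⟨φ, fun {a b} => map_adj_iff_of_mapsTo_domSet φ hC
    (fun x hx => hφC x hx ▸ hD (f ⟨x, hx⟩).2) (fun a b ha hb => ?_) a b⟩⟩
  rw [hφCc a ha, hφCc b hb]
  exact g.map_adj_iff

end SimpleGraph

namespace SimpleGraph.Subgraph

variable {V : Type*} {G : SimpleGraph V} {c : Finset V}

lemma notMem_of_mem_commonNbhd {v : V} (hv : v ∈ commonNbhd G c) : v ∉ c :=
  fun hvc => G.loopless.irrefl v (hv v hvc)

lemma mem_commonNbhd_of_subset_subDomSet {J : G.Subgraph} (hJ : ↑c ⊆ subDomSet J) {v : V}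
    (hv : v ∈ J.verts) (hvc : v ∉ c) : v ∈ commonNbhd G c := fun _ hx =>
  J.adj_sub ((hJ hx).2 v hv fun h => hvc (h ▸ hx))

/-- For `c ⊆ subDomSet J` this is `J` with the vertices of `c` deleted. -/
abbrev toCommonNbhd (c : Finset V) (J : G.Subgraph) : (G.induce (commonNbhd G c)).Subgraph :=
  J.comap (Embedding.induce (commonNbhd G c)).toHom

/-- The inverse of `toCommonNbhd`: put back `c` as vertices adjacent to all others. -/
def ofCommonNbhd (hc : G.IsClique (c : Set V)) (J' : (G.induce (commonNbhd G c)).Subgraph) :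
    G.Subgraph where
  verts := ↑c ∪ Subtype.val '' J'.verts
  Adj a b := a ≠ b ∧ a ∈ (↑c ∪ Subtype.val '' J'.verts : Set V) ∧
    b ∈ (↑c ∪ Subtype.val '' J'.verts : Set V) ∧
    (a ∈ c ∨ b ∈ c ∨ Relation.Map J'.Adj Subtype.val Subtype.val a b)
  adj_sub := by
    rintro a b ⟨hne, ha, hb, hac | hbc | ⟨x, y, hxy, rfl, rfl⟩⟩
    · rcases hb with hbc | ⟨y, -, rfl⟩
      exacts [hc hac hbc hne, y.2 a hac]
    · rcases ha with hac | ⟨x, -, rfl⟩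
      exacts [hc hac hbc hne, (x.2 b hbc).symm]
    · exact J'.adj_sub hxy
  edge_vert h := h.2.1
  symm := ⟨fun a b ⟨hne, ha, hb, h⟩ => ⟨hne.symm, hb, ha, by
    rcases h with hac | hbc | ⟨x, y, hxy, rfl, rfl⟩
    exacts [Or.inr (Or.inl hac), Or.inl hbc, Or.inr (Or.inr ⟨y, x, hxy.symm, rfl, rfl⟩)]⟩⟩

variable (hc : G.IsClique (c : Set V))

lemma subset_subDomSet_ofCommonNbhd (J' : (G.induce (commonNbhd G c)).Subgraph) :
    ↑c ⊆ subDomSet (ofCommonNbhd hc J') := fun _ hx =>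
  ⟨Or.inl hx, fun _ hw hne => ⟨hne.symm, Or.inl hx, hw, Or.inl hx⟩⟩

lemma toCommonNbhd_ofCommonNbhd (J' : (G.induce (commonNbhd G c)).Subgraph) :
    toCommonNbhd c (ofCommonNbhd hc J') = J' := by
  ext x y
  · simp [ofCommonNbhd, notMem_of_mem_commonNbhd x.2]
  · refine ⟨fun ⟨_, _, _, _, h⟩ => ?_, fun h => ⟨h.adj_sub, fun e => h.ne (Subtype.ext e),
      Or.inr ⟨x, J'.edge_vert h, rfl⟩, Or.inr ⟨y, J'.edge_vert h.symm, rfl⟩,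
      Or.inr (Or.inr ⟨x, y, h, rfl, rfl⟩)⟩⟩
    rcases h with hx | hy | ⟨a, b, hab, ha, hb⟩
    exacts [absurd hx (notMem_of_mem_commonNbhd x.2), absurd hy (notMem_of_mem_commonNbhd y.2),
      Subtype.ext ha ▸ Subtype.ext hb ▸ hab]

lemma ofCommonNbhd_toCommonNbhd {J : G.Subgraph} (hJ : ↑c ⊆ subDomSet J) :
    ofCommonNbhd hc (toCommonNbhd c J) = J := by
  have hverts : (↑c ∪ Subtype.val '' (toCommonNbhd c J).verts : Set V) = J.verts := by
    ext v
    by_cases hvc : v ∈ c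
    · simp [hvc, (hJ hvc).1]
    · simpa [hvc] using fun hv => mem_commonNbhd_of_subset_subDomSet hJ hv hvc
  ext a b
  · exact Set.ext_iff.1 hverts a
  · change a ≠ b ∧ a ∈ _ ∧ b ∈ _ ∧ _ ↔ _
    rw [hverts]
    refine ⟨?_, fun hab => ⟨hab.ne, J.edge_vert hab, J.edge_vert hab.symm, ?_⟩⟩
    · rintro ⟨hne, ha, hb, hac | hbc | ⟨x, y, ⟨-, hxy⟩, rfl, rfl⟩⟩
      exacts [(hJ hac).2 b hb hne.symm, ((hJ hbc).2 a ha hne).symm, hxy]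
    by_cases hac : a ∈ c
    · exact Or.inl hac
    by_cases hbc : b ∈ c
    · exact Or.inr (Or.inl hbc)
    exact Or.inr (Or.inr ⟨⟨a, mem_commonNbhd_of_subset_subDomSet hJ (J.edge_vert hab) hac⟩,
      ⟨b, mem_commonNbhd_of_subset_subDomSet hJ (J.edge_vert hab.symm) hbc⟩,
      ⟨hab.adj_sub, hab⟩, rfl, rfl⟩)

lemma nonempty_coe_toCommonNbhd_iso {J : G.Subgraph} (hJ : ↑c ⊆ subDomSet J) :
    Nonempty ((toCommonNbhd c J).coe ≃g J.coe.induce {v | ↑v ∉ c}) :=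
  ⟨{ toFun x := ⟨⟨x.1.1, x.2⟩, notMem_of_mem_commonNbhd x.1.2⟩
     invFun v := ⟨⟨v.1.1, mem_commonNbhd_of_subset_subDomSet hJ v.1.2 v.2⟩, v.1.2⟩
     left_inv _ := rfl
     right_inv _ := rfl
     map_rel_iff' := ⟨fun h => ⟨h.adj_sub, h⟩, And.right⟩ }⟩

lemma nonempty_iso_iff_toCommonNbhd {α : Type*} {H : SimpleGraph α} {D : Finset α}
    {J : G.Subgraph} (hJ : ↑c ⊆ subDomSet J) (hD : ↑D ⊆ domSet H)
    (hcard : c.card = D.card) :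
    Nonempty (J.coe ≃g H) ↔ Nonempty ((toCommonNbhd c J).coe ≃g H.induce (↑D)ᶜ) := by
  obtain ⟨i⟩ := nonempty_coe_toCommonNbhd_iso hJ
  let f : {v : J.verts | ↑v ∈ c} ≃ D :=
    (Equiv.subtypeSubtypeEquivSubtype fun hv => (hJ hv).1).trans (c.equivOfCardEq hcard)
  have hC : {v : J.verts | ↑v ∈ c} ⊆ domSet J.coe := fun v hv w hne =>
    (hJ hv).2 w.1 w.2 fun h => hne (Subtype.ext h)
  have : Finite {v : J.verts | ↑v ∈ c} := Finite.of_equiv _ f.symm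
  constructor
  · rintro ⟨e⟩
    obtain ⟨g⟩ := e.nonempty_induce_compl_iso hC hD f
    exact ⟨i.trans g⟩
  · rintro ⟨g⟩
    exact nonempty_iso_of_induce_compl_iso hC hD f (i.symm.trans g)

end SimpleGraph.Subgraph

theorem stmt8_general {h : ℕ} (H : SimpleGraph (Fin h)) (u : ℕ)
    (D : Finset (Fin h)) (hD : ↑D ⊆ domSet H) (hDcard : D.card = u)
    {V : Type*} (G : SimpleGraph V) (c : Finset V) (hc : G.IsNClique u c) :
    {J : G.Subgraph | Nonempty (J.coe ≃g H) ∧ ↑c ⊆ subDomSet J}.ncard =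
      _root_.copyCount (H.induce ((↑D : Set (Fin h))ᶜ)) (G.induce (commonNbhd G c)) := by
  have hcard : c.card = D.card := hc.card_eq.trans hDcard.symm
  refine (Set.InvOn.bijOn (f := Subgraph.toCommonNbhd c)
    (f' := Subgraph.ofCommonNbhd hc.isClique)
    ⟨fun J hJ => Subgraph.ofCommonNbhd_toCommonNbhd hc.isClique hJ.2,
      fun J' _ => Subgraph.toCommonNbhd_ofCommonNbhd hc.isClique J'⟩ ?_ ?_).ncard_eq
  · rintro J ⟨e, hJ⟩
    exact (Subgraph.nonempty_iso_iff_toCommonNbhd hJ hD hcard).1 e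
  · rintro J' e
    have hJ := Subgraph.subset_subDomSet_ofCommonNbhd hc.isClique J'
    refine ⟨(Subgraph.nonempty_iso_iff_toCommonNbhd hJ hD hcard).2 ?_, hJ⟩
    rwa [Subgraph.toCommonNbhd_ofCommonNbhd]

/-- `N_c(H,G) = N(H^{↓u}, G[N(c)])` for any `u`-clique `c`. -/
theorem stmt8 {h : ℕ} (H : SimpleGraph (Fin h)) (u : ℕ) (hu : 1 ≤ u)
    (hdom : u ≤ domCount H) (D : Finset (Fin h)) (hD : ↑D ⊆ domSet H) (hDcard : D.card = u)
    {V : Type*} [Fintype V] (G : SimpleGraph V) (c : Finset V) (hc : G.IsNClique u c) :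
    {J : G.Subgraph | Nonempty (J.coe ≃g H) ∧ ↑c ⊆ subDomSet J}.ncard =
      _root_.copyCount (H.induce ((↑D : Set (Fin h))ᶜ)) (G.induce (commonNbhd G c)) :=
  stmt8_general H u D hD hDcard G c hc
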